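/- For all n ≥ 1, every w ∈ W_n and every i ∈ {0,1,2} with w ≠ iⁿ, the effective resistance satisfies R_n(w, iⁿ) ≤ (5/2)·(5/3)ⁿ. -/

import Mathlib

open MeasureTheory Filter Set
open scoped ENNReal NNReal Classical

noncomputable section

namespace SG

/-- The three vertices `p₀ = (0,0)`, `p₁ = (1,0)`, `p₂ = (1/2, √3/2)` viewed in `ℂ`. -/
def p : Fin 3 → ℂ := ![0, 1, 1/2 + (Real.sqrt 3 / 2) * Complex.I]

/-- The three contraction maps `fᵢ x = (x + pᵢ)/2`. -/
def f (i : Fin 3) (x : ℂ) : ℂ := (x + p i) / 2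

/-- `K` is the Sierpinski gasket: the (unique) nonempty compact set with
`K = f₀(K) ∪ f₁(K) ∪ f₂(K)`. -/
def IsSG (K : Set ℂ) : Prop :=
  K.Nonempty ∧ IsCompact K ∧ K = f 0 '' K ∪ f 1 '' K ∪ f 2 '' K

/-- `α = log 3 / log 2`. -/
def alpha : ℝ := Real.log 3 / Real.log 2

/-- `β* = log 5 / log 2`. -/
def betastar : ℝ := Real.log 5 / Real.log 2

/-- The normalized `α`-dimensional Hausdorff measure restricted to `K`. -/
def nu (K : Set ℂ) : Measure ℂ :=
  ((Measure.hausdorffMeasure alpha : Measure ℂ) K)⁻¹ •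
    (Measure.hausdorffMeasure alpha : Measure ℂ).restrict K

/-- `f_w` for a finite word `w` over `{0,1,2}` (empty word gives the identity). -/
def fwl : List (Fin 3) → ℂ → ℂ
  | [] => id
  | i :: t => f i ∘ fwl t

/-- `f_w` for a word `w ∈ W_n = {0,1,2}ⁿ`. -/
def fw {n : ℕ} (w : Fin n → Fin 3) : ℂ → ℂ := fwl (List.ofFn w)

/-- The cell `K_w = f_w(K)`. -/
def Kw (K : Set ℂ) {n : ℕ} (w : Fin n → Fin 3) : Set ℂ := fw w '' K

/-- Adjacency `w⁽¹⁾ ∼ₙ w⁽²⁾`: distinct words with intersecting cells. -/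
def Adj (K : Set ℂ) {n : ℕ} (w1 w2 : Fin n → Fin 3) : Prop :=
  w1 ≠ w2 ∧ (Kw K w1 ∩ Kw K w2).Nonempty

/-- `Pₙu(w) = ∫_K u(f_w(x)) ν(dx)`. -/
def P (K : Set ℂ) {n : ℕ} (u : ℂ → ℝ) (w : Fin n → Fin 3) : ℝ :=
  ∫ x, u (fw w x) ∂(nu K)

/-- `Aₙ(u)`: sum over unordered adjacent pairs in `W_n` of `(Pₙu(w⁽¹⁾) − Pₙu(w⁽²⁾))²`
(written as half the sum over ordered pairs). -/
def A (K : Set ℂ) (n : ℕ) (u : ℂ → ℝ) : ℝ :=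
  (1/2) * ∑ w1 : Fin n → Fin 3, ∑ w2 : Fin n → Fin 3,
    if Adj K w1 w2 then (P K u w1 - P K u w2)^2 else 0

/-- The graph energy `Eₙ(u,u)` on `W_n` (half the sum over ordered adjacent pairs). -/
def En (K : Set ℂ) {n : ℕ} (u : (Fin n → Fin 3) → ℝ) : ℝ :=
  (1/2) * ∑ w1 : Fin n → Fin 3, ∑ w2 : Fin n → Fin 3,
    if Adj K w1 w2 then (u w1 - u w2)^2 else 0

/-- The effective resistance `Rₙ(a,b)` between two words of `W_n`. -/
def Rn (K : Set ℂ) {n : ℕ} (a b : Fin n → Fin 3) : ℝ :=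
  (sInf {e : ℝ | ∃ u : (Fin n → Fin 3) → ℝ, u a = 1 ∧ u b = 0 ∧ e = En K u})⁻¹

/-!
By Thomson's principle the resistance between `a` and `b` is at most the energy of any unit
flow from `a` to `b`: Cauchy–Schwarz applied to `∑ θ x y * (u x - u y) = 2 * (u a - u b)`.
A unit flow from `w` to `iⁿ` is built recursively over the first letter of `w`: inside the
cell `w 0` it runs to the corner facing the cell `i`, crosses the single edge into the cell `i`,
and is spread over the cell `i` by the three-terminal flow `cornerFlow`. Splitting the corner
currents `a` (with `∑ a = 0`) among the three subcells multiplies `∑ a ^ 2` by `5 / 3` and costs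
`∑ a ^ 2 / 3` on the bridges, so `cornerFlow n a` has energy `((5/3)ⁿ - 1) / 2 * ∑ a ^ 2`.
Hence the energy `Eₙ` of the unit flow satisfies `Eₙ₊₁ ≤ Eₙ + (5/3)ⁿ`, i.e.
`Eₙ ≤ 3/2 * ((5/3)ⁿ - 1)`.
-/

section Flows

variable {V : Type*}

structure IsFlow (r : V → V → Prop) (θ : V → V → ℝ) : Prop where
  antisymm : ∀ x y, θ x y = -θ y x
  support : ∀ x y, θ x y ≠ 0 → r x y

lemma isFlow_zero (r : V → V → Prop) : IsFlow r (0 : V → V → ℝ) :=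
  ⟨fun _ _ => by simp, fun _ _ h => absurd rfl h⟩

def dipole [DecidableEq V] (a b : V) (x : V) : ℝ :=
  (if x = a then 1 else 0) - (if x = b then 1 else 0)

def edgeFlow [DecidableEq V] (a b : V) (x y : V) : ℝ :=
  (if x = a ∧ y = b then 1 else 0) - (if x = b ∧ y = a then 1 else 0)

lemma edgeFlow_antisymm [DecidableEq V] (a b x y : V) :
    edgeFlow a b x y = -edgeFlow a b y x := by
  simp only [edgeFlow, and_comm (a := y = _)]; ring

lemma edgeFlow_self [DecidableEq V] (a : V) : edgeFlow a a = 0 := by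
  ext x y; simp [edgeFlow]

lemma edgeFlow_apply_self [DecidableEq V] (a b x : V) : edgeFlow a b x x = 0 := by
  simp only [edgeFlow, and_comm (a := x = a)]; ring

variable [Fintype V]

def divergence (θ : V → V → ℝ) (x : V) : ℝ := ∑ y, θ x y

def flowEnergy (θ : V → V → ℝ) : ℝ := (1/2) * ∑ x, ∑ y, θ x y ^ 2

def dirichletEnergy (r : V → V → Prop) (u : V → ℝ) : ℝ :=
  (1/2) * ∑ x, ∑ y, if r x y then (u x - u y) ^ 2 else 0

def effectiveResistance (r : V → V → Prop) (a b : V) : ℝ :=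
  (sInf {e : ℝ | ∃ u : V → ℝ, u a = 1 ∧ u b = 0 ∧ e = dirichletEnergy r u})⁻¹

lemma sum_dipole [DecidableEq V] (a b : V) : ∑ x, dipole a b x = 0 := by
  simp [dipole, Finset.sum_sub_distrib]

lemma sum_dipole_sq [DecidableEq V] {a b : V} (hab : a ≠ b) : ∑ x, dipole a b x ^ 2 = 2 := by
  rw [Fintype.sum_eq_add a b hab fun x hx => by simp [dipole, hx.1, hx.2]]
  norm_num [dipole, hab, hab.symm]

lemma sum_sum_edgeFlow_sq [DecidableEq V] {a b : V} (hab : a ≠ b) :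
    ∑ x, ∑ y, edgeFlow a b x y ^ 2 = 2 := by
  rw [Fintype.sum_eq_add a b hab fun x hx => by simp [edgeFlow, hx.1, hx.2],
    Fintype.sum_eq_add a b hab fun y hy => by simp [edgeFlow, hy.1, hy.2],
    Fintype.sum_eq_add a b hab fun y hy => by simp [edgeFlow, hy.1, hy.2]]
  norm_num [edgeFlow, hab, hab.symm]

lemma sum_dipole_mul [DecidableEq V] (a b : V) (u : V → ℝ) :
    ∑ x, dipole a b x * u x = u a - u b := by
  simp [dipole, sub_mul, Finset.sum_sub_distrib]

lemma sum_sum_mul_sub_eq_two_mul_sum_divergence {θ : V → V → ℝ}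
    (hθ : ∀ x y, θ x y = -θ y x) (u : V → ℝ) :
    ∑ x, ∑ y, θ x y * (u x - u y) = 2 * ∑ x, divergence θ x * u x := by
  have hswap : ∑ x, ∑ y, θ x y * u y = -∑ x, ∑ y, θ x y * u x := by
    rw [Finset.sum_comm, ← Finset.sum_neg_distrib]
    refine Finset.sum_congr rfl fun x _ => ?_
    rw [← Finset.sum_neg_distrib]
    exact Finset.sum_congr rfl fun y _ => by rw [hθ]; ring
  simp only [mul_sub, Finset.sum_sub_distrib, hswap, divergence, Finset.sum_mul]
  ring

/-- One half of Thomson's principle. -/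
theorem sq_sub_le_flowEnergy_mul_dirichletEnergy [DecidableEq V] {r : V → V → Prop}
    {θ : V → V → ℝ} (hθ : IsFlow r θ) {a b : V}
    (hdiv : ∀ x, divergence θ x = dipole a b x) (u : V → ℝ) :
    (u a - u b) ^ 2 ≤ flowEnergy θ * dirichletEnergy r u := by
  set du : V × V → ℝ := fun q => if r q.1 q.2 then u q.1 - u q.2 else 0
  have hpair : ∑ q : V × V, θ q.1 q.2 * du q = 2 * (u a - u b) := by
    have hsupp : ∀ x y, θ x y * du (x, y) = θ x y * (u x - u y) := fun x y => by
      by_cases hxy : r x y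
      · simp [du, hxy]
      · simp [du, hxy, not_imp_comm.mp (hθ.support x y) hxy]
    simp only [Fintype.sum_prod_type, hsupp,
      sum_sum_mul_sub_eq_two_mul_sum_divergence hθ.antisymm, hdiv, sum_dipole_mul]
  have hdu : ∑ q : V × V, du q ^ 2 = 2 * dirichletEnergy r u := by
    simp only [dirichletEnergy, Fintype.sum_prod_type, du, ite_pow]
    ring_nf
  have hθ2 : ∑ q : V × V, θ q.1 q.2 ^ 2 = 2 * flowEnergy θ := by
    simp only [flowEnergy, Fintype.sum_prod_type]
    ring
  have := Finset.sum_mul_sq_le_sq_mul_sq Finset.univ (fun q : V × V => θ q.1 q.2) du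
  rw [hpair, hdu, hθ2] at this
  linarith

lemma flowEnergy_nonneg (θ : V → V → ℝ) : 0 ≤ flowEnergy θ := by
  unfold flowEnergy; positivity

theorem effectiveResistance_le_flowEnergy [DecidableEq V] {r : V → V → Prop}
    {θ : V → V → ℝ} (hθ : IsFlow r θ) {a b : V} (hab : a ≠ b)
    (hdiv : ∀ x, divergence θ x = dipole a b x) :
    effectiveResistance r a b ≤ flowEnergy θ := by
  set S := {e : ℝ | ∃ u : V → ℝ, u a = 1 ∧ u b = 0 ∧ e = dirichletEnergy r u}
  have hS : ∀ u : V → ℝ, u a = 1 → u b = 0 → 1 ≤ flowEnergy θ * dirichletEnergy r u :=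
    fun u ha hb => by simpa [ha, hb] using sq_sub_le_flowEnergy_mul_dirichletEnergy hθ hdiv u
  set δ : V → ℝ := fun x => if x = a then 1 else 0
  have hδa : δ a = 1 := if_pos rfl
  have hδb : δ b = 0 := if_neg hab.symm
  have hpos : 0 < flowEnergy θ := (flowEnergy_nonneg θ).lt_of_ne fun h => by
    have := hS δ hδa hδb
    rw [← h, zero_mul] at this
    exact absurd this (by norm_num)
  have hinf : (flowEnergy θ)⁻¹ ≤ sInf S := by
    refine le_csInf ⟨_, δ, hδa, hδb, rfl⟩ ?_
    rintro e ⟨u, ha, hb, rfl⟩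
    rw [inv_le_iff_one_le_mul₀' hpos]
    exact hS u ha hb
  calc effectiveResistance r a b = (sInf S)⁻¹ := rfl
    _ ≤ ((flowEnergy θ)⁻¹)⁻¹ := inv_anti₀ (inv_pos.2 hpos) hinf
    _ = flowEnergy θ := inv_inv _

end Flows

section Words

variable {α : Type*} {n : ℕ}

lemma cons_eq_const_iff {c m : α} {t : Fin n → α} :
    (Fin.cons c t : Fin (n + 1) → α) = (fun _ => m) ↔ c = m ∧ t = fun _ => m := by
  rw [← Fin.cons_self_tail (fun _ : Fin (n + 1) => m), Fin.cons_inj]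
  rfl

lemma sum_fin_succ_pi [Fintype α] (g : (Fin (n + 1) → α) → ℝ) :
    ∑ x, g x = ∑ c, ∑ t : Fin n → α, g (Fin.cons c t) := by
  rw [← (Fin.consEquiv fun _ => α).sum_comp, Fintype.sum_prod_type]
  rfl

variable [DecidableEq α]

def cornerSource [Fintype α] (a : α → ℝ) (x : Fin n → α) : ℝ :=
  ∑ m, a m * if x = (fun _ => m) then 1 else 0

lemma cornerSource_dipole [Fintype α] (j i : α) (x : Fin n → α) :
    cornerSource (dipole j i) x = dipole (fun _ => j) (fun _ => i) x := by
  simp only [cornerSource, dipole, sub_mul, ite_mul, one_mul, zero_mul, Finset.sum_sub_distrib,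
    Finset.sum_ite_eq', Finset.mem_univ, if_true]

lemma cornerSource_edgeFlow [Fintype α] (j i c : α) (x : Fin n → α) :
    cornerSource (edgeFlow j i c) x =
      (if c = j ∧ x = (fun _ => i) then 1 else 0) -
        if c = i ∧ x = (fun _ => j) then 1 else 0 := by
  simp only [cornerSource, edgeFlow, sub_mul, ite_and, ite_mul, one_mul, zero_mul,
    Finset.sum_sub_distrib, Finset.sum_ite_eq', Finset.mem_univ, if_true, Finset.sum_ite_irrel,
    Finset.sum_const_zero]

/-- The flow on words of length `n + 1` that is `θ c` inside the cell `c` and carries `b c c'`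
across the edge from `c c'ⁿ` to `c' cⁿ`, where the cells `c` and `c'` touch. -/
def glue (θ : α → (Fin n → α) → (Fin n → α) → ℝ) (b : α → α → ℝ)
    (x y : Fin (n + 1) → α) : ℝ :=
  if x 0 = y 0 then θ (x 0) (Fin.tail x) (Fin.tail y)
  else if Fin.tail x = (fun _ => y 0) ∧ Fin.tail y = (fun _ => x 0) then b (x 0) (y 0) else 0

variable {θ : α → (Fin n → α) → (Fin n → α) → ℝ} {b : α → α → ℝ}

lemma glue_cons (c c' : α) (t t' : Fin n → α) :
    glue θ b (Fin.cons c t) (Fin.cons c' t') =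
      if c = c' then θ c t t'
      else if t = (fun _ => c') ∧ t' = (fun _ => c) then b c c' else 0 := by
  simp [glue]

variable [Fintype α]

lemma divergence_glue (hb : ∀ c, b c c = 0) (c : α) (t : Fin n → α) :
    divergence (glue θ b) (Fin.cons c t) =
      divergence (θ c) t + cornerSource (b c) t := by
  have hcell : ∀ c', ∑ t', glue θ b (Fin.cons c t) (Fin.cons c' t') =
      (if c = c' then divergence (θ c) t else 0) +
        b c c' * if t = (fun _ => c') then 1 else 0 := by
    intro c'
    by_cases h : c = c'
    · subst h; simp [glue_cons, divergence, hb]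
    · simp [glue_cons, h, ite_and]
  simp only [divergence, cornerSource, sum_fin_succ_pi, hcell, Finset.sum_add_distrib,
    Finset.sum_ite_eq, Finset.mem_univ, if_true]

lemma flowEnergy_glue (hb : ∀ c, b c c = 0) :
    flowEnergy (glue θ b) = ∑ c, flowEnergy (θ c) + (1/2) * ∑ c, ∑ c', b c c' ^ 2 := by
  have hcell : ∀ c c', ∑ t, ∑ t', glue θ b (Fin.cons c t) (Fin.cons c' t') ^ 2 =
      (if c = c' then ∑ t, ∑ t', θ c t t' ^ 2 else 0) + b c c' ^ 2 := by
    intro c c'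
    by_cases h : c = c'
    · subst h; simp [glue_cons, hb]
    · simp [glue_cons, h, ite_and, ite_pow]
  simp only [flowEnergy, sum_fin_succ_pi]
  rw [Finset.sum_congr rfl fun c _ => Finset.sum_comm]
  simp only [hcell, Finset.sum_add_distrib, Finset.sum_ite_eq, Finset.mem_univ, if_true]
  rw [mul_add, Finset.mul_sum]

end Words

section Gasket

variable {K : Set ℂ} {n : ℕ}

lemma f_apply_p_self (i : Fin 3) : f i (p i) = p i := by
  simp only [f]; ring

lemma f_apply_p_comm (i j : Fin 3) : f i (p j) = f j (p i) := by
  simp only [f]; ring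

lemma image_f_subset (hK : IsSG K) (i : Fin 3) : f i '' K ⊆ K := by
  conv_rhs => rw [hK.2.2]
  fin_cases i
  · exact subset_union_left.trans subset_union_left
  · exact subset_union_right.trans subset_union_left
  · exact subset_union_right

lemma iterate_f_apply (i : Fin 3) (x : ℂ) (k : ℕ) :
    (f i)^[k] x = p i + (x - p i) * (1 / 2) ^ k := by
  induction k with
  | zero => simp
  | succ k ih => rw [Function.iterate_succ_apply', ih, f, pow_succ]; ring

lemma p_mem (hK : IsSG K) (i : Fin 3) : p i ∈ K := by
  obtain ⟨x, hx⟩ := hK.1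
  have hmem : ∀ k, (f i)^[k] x ∈ K := by
    intro k
    induction k with
    | zero => exact hx
    | succ k ih => rw [Function.iterate_succ_apply']; exact image_f_subset hK i ⟨_, ih, rfl⟩
  have hlim : Tendsto (fun k => (f i)^[k] x) atTop (nhds (p i)) := by
    simp only [iterate_f_apply]
    have h := (tendsto_pow_atTop_nhds_zero_of_norm_lt_one (x := (1 / 2 : ℂ))
      (by norm_num)).const_mul (x - p i) |>.const_add (p i)
    simpa using h
  exact hK.2.1.isClosed.mem_of_tendsto hlim (Eventually.of_forall hmem)

lemma fw_cons (i : Fin 3) (a : Fin n → Fin 3) :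
    fw (Fin.cons i a : Fin (n + 1) → Fin 3) = f i ∘ fw a := by
  simp only [fw, List.ofFn_succ, Fin.cons_zero, Fin.cons_succ]
  rfl

lemma Kw_cons (i : Fin 3) (a : Fin n → Fin 3) :
    Kw K (Fin.cons i a : Fin (n + 1) → Fin 3) = f i '' Kw K a := by
  rw [Kw, Kw, fw_cons, Set.image_comp]

lemma fw_const_apply_p (i : Fin 3) : fw (fun _ : Fin n => i) (p i) = p i := by
  induction n with
  | zero => rfl
  | succ n ih =>
    rw [← Fin.cons_self_tail (fun _ : Fin (n + 1) => i), fw_cons]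
    exact (congrArg (f i) ih).trans (f_apply_p_self i)

lemma p_mem_Kw_const (hK : IsSG K) (i : Fin 3) : p i ∈ Kw K (fun _ : Fin n => i) :=
  ⟨p i, p_mem hK i, fw_const_apply_p i⟩

lemma Adj.cons {a b : Fin n → Fin 3} (h : Adj K a b) (i : Fin 3) :
    Adj K (Fin.cons i a : Fin (n + 1) → Fin 3) (Fin.cons i b) := by
  obtain ⟨hne, z, hza, hzb⟩ := h
  refine ⟨fun he => hne (Fin.cons_injective2 he).2, f i z, ?_, ?_⟩
  · rw [Kw_cons]; exact ⟨z, hza, rfl⟩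
  · rw [Kw_cons]; exact ⟨z, hzb, rfl⟩

/-- The cells `i` and `j` touch at `f i (p j) = f j (p i)`. -/
lemma adj_cons_const (hK : IsSG K) {i j : Fin 3} (h : i ≠ j) :
    Adj K (Fin.cons i (fun _ => j) : Fin (n + 1) → Fin 3) (Fin.cons j fun _ => i) := by
  refine ⟨fun he => h (by simpa using congrFun he 0), f i (p j), ?_, ?_⟩
  · rw [Kw_cons]; exact ⟨p j, p_mem_Kw_const hK j, rfl⟩
  · rw [Kw_cons, f_apply_p_comm]; exact ⟨p i, p_mem_Kw_const hK i, rfl⟩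

lemma isFlow_glue (hK : IsSG K) {θ : Fin 3 → (Fin n → Fin 3) → (Fin n → Fin 3) → ℝ}
    {b : Fin 3 → Fin 3 → ℝ} (hθ : ∀ c, IsFlow (Adj K) (θ c))
    (hb : ∀ c c', b c c' = -b c' c) :
    IsFlow (Adj K) (glue θ b) := by
  constructor
  · intro x y
    induction x using Fin.consCases with | cons c t => ?_
    induction y using Fin.consCases with | cons c' t' => ?_
    simp only [glue_cons]
    by_cases hc : c = c'
    · subst hc; simp [(hθ c).antisymm t t']
    · simp only [hc, Ne.symm hc, if_false, and_comm (a := t = _), hb c c']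
      split_ifs <;> simp
  · intro x y h
    induction x using Fin.consCases with | cons c t => ?_
    induction y using Fin.consCases with | cons c' t' => ?_
    rw [glue_cons] at h
    split_ifs at h with hc hedge
    · subst hc; exact ((hθ c).support _ _ h).cons c
    · obtain ⟨rfl, rfl⟩ := hedge; exact adj_cons_const hK hc
    · exact absurd rfl h

end Gasket

section CornerFlow

variable {K : Set ℂ} {n : ℕ}

/-- The corner currents of the cell `c` in `cornerFlow (n + 1) a`, whose bridge from the cell `c`
to the cell `m` carries `(a c - a m) / 3`. -/
def cellCurrents (a : Fin 3 → ℝ) (c : Fin 3) : Fin 3 → ℝ :=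
  fun m => if m = c then a c else (a m - a c) / 3

def cornerFlow : (n : ℕ) → (Fin 3 → ℝ) → (Fin n → Fin 3) → (Fin n → Fin 3) → ℝ
  | 0, _ => 0
  | n + 1, a => glue (fun c => cornerFlow n (cellCurrents a c)) fun c c' => (a c - a c') / 3

variable {a : Fin 3 → ℝ}

lemma sum_cellCurrents (ha : ∑ m, a m = 0) (c : Fin 3) : ∑ m, cellCurrents a c m = 0 := by
  rw [Fin.sum_univ_three] at ha
  fin_cases c <;> simp [cellCurrents, Fin.sum_univ_three] <;> linarith

lemma sum_sum_cellCurrents_sq (ha : ∑ m, a m = 0) :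
    ∑ c, ∑ m, cellCurrents a c m ^ 2 = 5 / 3 * ∑ m, a m ^ 2 := by
  rw [Fin.sum_univ_three] at ha
  simp only [cellCurrents, ite_pow, Fin.sum_univ_three, Fin.isValue, ↓reduceIte, one_ne_zero,
    Fin.reduceEq, zero_ne_one]
  linear_combination (-(2 / 9) * (a 0 + a 1 + a 2)) * ha

lemma sum_sum_bridge_sq (ha : ∑ m, a m = 0) :
    ∑ c, ∑ c', ((a c - a c') / 3) ^ 2 = 2 / 3 * ∑ m, a m ^ 2 := by
  rw [Fin.sum_univ_three] at ha
  simp only [Fin.sum_univ_three]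
  linear_combination (-(2 / 9) * (a 0 + a 1 + a 2)) * ha

lemma isFlow_cornerFlow (hK : IsSG K) (n : ℕ) (a : Fin 3 → ℝ) :
    IsFlow (Adj K) (cornerFlow n a) := by
  induction n generalizing a with
  | zero => exact isFlow_zero _
  | succ n ih => exact isFlow_glue hK (fun c => ih _) fun c c' => by ring

lemma divergence_cornerFlow (ha : ∑ m, a m = 0) (x : Fin n → Fin 3) :
    divergence (cornerFlow n a) x = cornerSource a x := by
  induction n generalizing a with
  | zero =>
    have hx : ∀ m : Fin 3, x = fun _ => m := fun _ => Subsingleton.elim _ _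
    rw [cornerSource, Finset.sum_congr rfl fun m _ => by rw [if_pos (hx m), mul_one], ha]
    simp [cornerFlow, divergence]
  | succ n ih =>
    induction x using Fin.consCases with | cons c t => ?_
    rw [cornerFlow, divergence_glue (by simp), ih (sum_cellCurrents ha c), cornerSource,
      cornerSource, cornerSource, ← Finset.sum_add_distrib]
    refine Finset.sum_congr rfl fun m _ => ?_
    by_cases ht : t = fun _ => m
    · by_cases hm : m = c
      · subst hm; simp [ht, cons_eq_const_iff, cellCurrents]
      · simp only [cellCurrents, hm, ↓reduceIte, ht, mul_one, cons_eq_const_iff, Ne.symm hm,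
          and_true, mul_zero]
        ring
    · simp [ht, cons_eq_const_iff]

lemma flowEnergy_cornerFlow (ha : ∑ m, a m = 0) :
    flowEnergy (cornerFlow n a) = ((5 / 3) ^ n - 1) / 2 * ∑ m, a m ^ 2 := by
  induction n generalizing a with
  | zero => simp [cornerFlow, flowEnergy]
  | succ n ih =>
    rw [cornerFlow, flowEnergy_glue (by simp)]
    simp only [ih (sum_cellCurrents ha _), ← Finset.mul_sum, sum_sum_cellCurrents_sq ha,
      sum_sum_bridge_sq ha]
    ring

end CornerFlow

section FlowToCorner

variable {K : Set ℂ} {n : ℕ}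

/-- A unit flow from `w` to the corner `iⁿ`: inside the first cell `w 0` it runs to that cell's
corner next to cell `i`, crosses over, and is then spread through cell `i` by a corner flow. -/
def flowToCorner :
    (n : ℕ) → (Fin n → Fin 3) → Fin 3 → (Fin n → Fin 3) → (Fin n → Fin 3) → ℝ
  | 0, _, _ => 0
  | n + 1, w, i =>
    glue (fun c => if c = w 0 then flowToCorner n (Fin.tail w) i
      else if c = i then cornerFlow n (dipole (w 0) i) else 0) (edgeFlow (w 0) i)

lemma isFlow_flowToCorner (hK : IsSG K) (n : ℕ) (w : Fin n → Fin 3) (i : Fin 3) :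
    IsFlow (Adj K) (flowToCorner n w i) := by
  induction n with
  | zero => exact isFlow_zero _
  | succ n ih =>
    refine isFlow_glue hK (fun c => ?_) (edgeFlow_antisymm _ _)
    split_ifs
    exacts [ih _, isFlow_cornerFlow hK _ _, isFlow_zero _]

lemma divergence_flowToCorner (w : Fin n → Fin 3) (i : Fin 3) (x : Fin n → Fin 3) :
    divergence (flowToCorner n w i) x = dipole w (fun _ => i) x := by
  induction n with
  | zero => simp [flowToCorner, divergence, dipole, Subsingleton.elim x w,
      Subsingleton.elim w fun _ => i]
  | succ n ih =>
    induction x using Fin.consCases with | cons c t => ?_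
    induction w using Fin.consCases with | cons j s => ?_
    rw [flowToCorner, divergence_glue (edgeFlow_apply_self _ _), cornerSource_edgeFlow]
    simp only [Fin.cons_zero, Fin.tail_cons, dipole, Fin.cons_inj, cons_eq_const_iff]
    by_cases hcj : c = j
    · subst hcj
      rw [if_pos rfl, ih, dipole]
      by_cases hci : c = i <;> simp [hci]
    · by_cases hci : c = i
      · subst hci
        rw [if_neg hcj, if_pos rfl, divergence_cornerFlow (sum_dipole _ _), cornerSource_dipole]
        simp only [dipole, hcj, false_and, ↓reduceIte, true_and, zero_sub]
        ring
      · simp [hcj, hci, divergence]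

lemma flowEnergy_flowToCorner_le (w : Fin n → Fin 3) (i : Fin 3) :
    flowEnergy (flowToCorner n w i) ≤ 3 / 2 * ((5 / 3) ^ n - 1) := by
  induction n with
  | zero => simp [flowToCorner, flowEnergy]
  | succ n ih =>
    rw [flowToCorner, flowEnergy_glue (edgeFlow_apply_self _ _)]
    have ih := ih (Fin.tail w)
    have hpow : (5 / 3 : ℝ) ^ (n + 1) = 5 / 3 * (5 / 3) ^ n := pow_succ' _ _
    have hge : (1 : ℝ) ≤ (5 / 3) ^ n := one_le_pow₀ (by norm_num)
    by_cases hj : w 0 = i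
    · rw [Fintype.sum_eq_single i fun c hc => by simp [hj, hc, flowEnergy]]
      simp only [hj, edgeFlow_self, if_true, Pi.zero_apply, sq, mul_zero, Finset.sum_const_zero,
        add_zero]
      linarith
    · rw [Fintype.sum_eq_add (w 0) i hj fun c hc => by simp [hc.1, hc.2, flowEnergy]]
      simp only [if_true, hj, Ne.symm hj, if_false, flowEnergy_cornerFlow (sum_dipole _ _),
        sum_dipole_sq hj, sum_sum_edgeFlow_sq hj]
      linarith

end FlowToCorner

theorem statement4_general (K : Set ℂ) (hK : IsSG K) (n : ℕ)
    (w : Fin n → Fin 3) (i : Fin 3) (hw : w ≠ fun _ => i) :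
    Rn K w (fun _ => i) ≤ (5/2) * (5/3)^n := by
  calc Rn K w (fun _ => i) = effectiveResistance (Adj K) w (fun _ => i) := rfl
    _ ≤ flowEnergy (flowToCorner n w i) :=
      effectiveResistance_le_flowEnergy (isFlow_flowToCorner hK n w i) hw
        (divergence_flowToCorner w i)
    _ ≤ 3 / 2 * ((5 / 3) ^ n - 1) := flowEnergy_flowToCorner_le w i
    _ ≤ 5 / 2 * (5 / 3) ^ n := by linarith [pow_nonneg (by norm_num : (0 : ℝ) ≤ 5 / 3) n]

theorem statement4 (K : Set ℂ) (hK : IsSG K) (n : ℕ) (hn : 1 ≤ n)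
    (w : Fin n → Fin 3) (i : Fin 3) (hw : w ≠ fun _ => i) :
    Rn K w (fun _ => i) ≤ (5/2) * (5/3)^n :=
  statement4_general K hK n w i hw

end SG
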